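/- Uniform estimate: let Ω ⊂ ℝⁿ be a bounded open set of diameter d, and M_a a weighted partial trace operator of class 𝒜̄ with |a| = a_1+…+a_n. If u is upper semicontinuous on Ω̄, M_a(D²u) ≥ f in Ω in the viscosity sense, and f is bounded below, then u(x) ≤ max_{∂Ω} u + (d²/|a|)‖f⁻‖_{L^∞(Ω)} for all x ∈ Ω̄. If u is lower semicontinuous on Ω̄, M_a(D²u) ≤ f in Ω in the viscosity sense, and f is bounded above, then u(x) ≥ min_{∂Ω} u − (d²/|a|)‖f⁺‖_{L^∞(Ω)} for all x ∈ Ω̄. -/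

import Mathlib

open Set Metric MeasureTheory Filter

noncomputable section

/-- Euclidean `n`-space `ℝⁿ`. -/
abbrev En (n : ℕ) : Type := EuclideanSpace ℝ (Fin n)

/-- The eigenvalues of a (symmetric) matrix, arranged in nondecreasing order. -/
noncomputable def sortedEig {n : ℕ} (X : Matrix (Fin n) (Fin n) ℝ) : Fin n → ℝ :=
  if hX : X.IsHermitian then fun i => hX.eigenvalues (Tuple.sort hX.eigenvalues i) else 0

/-- The weighted partial trace operator `M_a(X) = Σ a_i λ_i(X)`. -/
noncomputable def Ma {n : ℕ} (a : Fin n → ℝ) (X : Matrix (Fin n) (Fin n) ℝ) : ℝ :=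
  ∑ i, a i * sortedEig X i

/-- The last index of `Fin n`. -/
def lastIdx (n : ℕ) [NeZero n] : Fin n :=
  ⟨n - 1, Nat.sub_lt (Nat.pos_of_ne_zero (NeZero.ne n)) Nat.one_pos⟩

/-- The class 𝒜̄ : all weights nonnegative, some weight positive. -/
def ClassAbar {n : ℕ} (a : Fin n → ℝ) : Prop := (∀ i, 0 ≤ a i) ∧ ∃ i, 0 < a i

/-- The class 𝒜 : nonnegative weights with `a 1 > 0` and `a n > 0`. -/
def ClassA {n : ℕ} [NeZero n] (a : Fin n → ℝ) : Prop :=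
  (∀ i, 0 ≤ a i) ∧ 0 < a 0 ∧ 0 < a (lastIdx n)

/-- The class 𝒜₁ : nonnegative weights with `a 1 > 0`. -/
def ClassA1 {n : ℕ} [NeZero n] (a : Fin n → ℝ) : Prop := (∀ i, 0 ≤ a i) ∧ 0 < a 0

/-- The class 𝒜ₙ : nonnegative weights with `a n > 0`. -/
def ClassAn {n : ℕ} [NeZero n] (a : Fin n → ℝ) : Prop :=
  (∀ i, 0 ≤ a i) ∧ 0 < a (lastIdx n)

/-- `a* = min (a 1) (a n)`. -/
noncomputable def aStar {n : ℕ} [NeZero n] (a : Fin n → ℝ) : ℝ := min (a 0) (a (lastIdx n))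

/-- `â_j = (a 1 + ⋯ + a n) - a j`. -/
noncomputable def hatA {n : ℕ} (a : Fin n → ℝ) (j : Fin n) : ℝ := (∑ i, a i) - a j

/-- The Hessian matrix of `φ` at `x`. -/
noncomputable def hess {n : ℕ} (φ : En n → ℝ) (x : En n) : Matrix (Fin n) (Fin n) ℝ :=
  fun i j => iteratedFDeriv ℝ 2 φ x ![EuclideanSpace.single i 1, EuclideanSpace.single j 1]

/-- The Hessian matrix of `φ` at `x`, with derivatives taken within `Ω`. -/
noncomputable def hessOn {n : ℕ} (Ω : Set (En n)) (φ : En n → ℝ) (x : En n) :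
    Matrix (Fin n) (Fin n) ℝ :=
  fun i j =>
    iteratedFDerivWithin ℝ 2 φ Ω x ![EuclideanSpace.single i 1, EuclideanSpace.single j 1]

/-- `u` is a viscosity subsolution of `M_a(D²u) = f` in `Ω`. -/
def IsViscSubsol {n : ℕ} (a : Fin n → ℝ) (Ω : Set (En n)) (f u : En n → ℝ) : Prop :=
  ∀ x₀ ∈ Ω, ∀ φ : En n → ℝ, ContDiff ℝ 2 φ →
    IsLocalMaxOn (fun x => u x - φ x) Ω x₀ → f x₀ ≤ Ma a (hess φ x₀)

/-- `u` is a viscosity supersolution of `M_a(D²u) = f` in `Ω`. -/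
def IsViscSupersol {n : ℕ} (a : Fin n → ℝ) (Ω : Set (En n)) (f u : En n → ℝ) : Prop :=
  ∀ x₀ ∈ Ω, ∀ φ : En n → ℝ, ContDiff ℝ 2 φ →
    IsLocalMinOn (fun x => u x - φ x) Ω x₀ → Ma a (hess φ x₀) ≤ f x₀

/-- `u` is a (continuous) viscosity solution of `M_a(D²u) = f` in `Ω`. -/
def IsViscSolution {n : ℕ} (a : Fin n → ℝ) (Ω : Set (En n)) (f u : En n → ℝ) : Prop :=
  ContinuousOn u Ω ∧ IsViscSubsol a Ω f u ∧ IsViscSupersol a Ω f u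

/-- The `L^p` norm of `f` on `D`. -/
noncomputable def lpNormOn {n : ℕ} (p : ℝ) (D : Set (En n)) (f : En n → ℝ) : ℝ :=
  (∫ x in D, |f x| ^ p) ^ (1 / p)

/-- The sup norm of `f` on `D`. -/
noncomputable def supAbsOn {n : ℕ} (D : Set (En n)) (f : En n → ℝ) : ℝ :=
  sSup ((fun x => |f x|) '' D)

/-- The Hölder seminorm `[h]_{β,D}`. -/
noncomputable def holderSemi {n : ℕ} (β : ℝ) (D : Set (En n)) (h : En n → ℝ) : ℝ :=
  sSup {r | ∃ x ∈ D, ∃ y ∈ D, x ≠ y ∧ r = |h x - h y| / ‖x - y‖ ^ β}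

/-- The Hölder norm `‖g‖_{C^β(D)} = sup_D |g| + [g]_{β,D}`. -/
noncomputable def cBetaNorm {n : ℕ} (β : ℝ) (D : Set (En n)) (g : En n → ℝ) : ℝ :=
  supAbsOn D g + holderSemi β D g

/-- `g` is `β`-Hölder continuous on `D`. -/
def HolderOn {n : ℕ} (β : ℝ) (D : Set (En n)) (g : En n → ℝ) : Prop :=
  ∃ K : ℝ, ∀ x ∈ D, ∀ y ∈ D, |g x - g y| ≤ K * ‖x - y‖ ^ β

/-- The `C^{1,β}(D)` norm: `sup|g| + sup|Dg| + [Dg]_{β,D}`. -/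
noncomputable def c1BetaNorm {n : ℕ} (β : ℝ) (D : Set (En n)) (g : En n → ℝ) : ℝ :=
  supAbsOn D g + sSup ((fun x => ‖fderiv ℝ g x‖) '' D) +
    sSup {r | ∃ x ∈ D, ∃ y ∈ D, x ≠ y ∧ r = ‖fderiv ℝ g x - fderiv ℝ g y‖ / ‖x - y‖ ^ β}

/-- `g ∈ C^{1,β}(D)`: differentiable with `β`-Hölder derivative on `D`. -/
def C1HolderOn {n : ℕ} (β : ℝ) (D : Set (En n)) (g : En n → ℝ) : Prop :=
  ContDiff ℝ 1 g ∧ ∃ K : ℝ, ∀ x ∈ D, ∀ y ∈ D,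
    ‖fderiv ℝ g x - fderiv ℝ g y‖ ≤ K * ‖x - y‖ ^ β

/-- Uniform exterior sphere condition with radius `R`: every boundary point lies on the
boundary of a closed ball of radius `R` containing `Ω̄`. -/
def ExtSphere {n : ℕ} (Ω : Set (En n)) (R : ℝ) : Prop :=
  ∀ y ∈ frontier Ω, ∃ z : En n, dist y z = R ∧ closure Ω ⊆ closedBall z R

/-- The cone `Σ_θ = {x : xₙ ≥ |x| cos θ}`. -/
def coneSet (n : ℕ) [NeZero n] (θ : ℝ) : Set (En n) := {x | ‖x‖ * Real.cos θ ≤ x (lastIdx n)}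

/-- Uniform exterior cone condition. -/
def ExtCone {n : ℕ} [NeZero n] (Ω : Set (En n)) : Prop :=
  ∃ θ₀ ∈ Set.Ioo (0 : ℝ) Real.pi, ∃ r₀ > (0 : ℝ), ∀ y ∈ frontier Ω,
    ∃ O : En n ≃ₗᵢ[ℝ] En n,
      closure Ω ∩ ball y r₀ ⊆ (fun x => y + O x) '' coneSet n θ₀

/-- Uniform Lipschitz boundary with Lipschitz constant `L`: near each boundary point, in
suitable rotated coordinates, `Ω` is the region above the graph of an `L`-Lipschitz
function. -/
def LipschitzBoundary {n : ℕ} [NeZero n] (Ω : Set (En n)) (L : ℝ) : Prop :=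
  ∃ r₀ > (0 : ℝ), ∀ y ∈ frontier Ω, ∃ O : En n ≃ₗᵢ[ℝ] En n, ∃ ψ : En n → ℝ,
    LipschitzWith (Real.toNNReal L) ψ ∧
    ∀ x ∈ ball (0 : En n) r₀,
      (y + O x ∈ Ω ↔ ψ (x - EuclideanSpace.single (lastIdx n) (x (lastIdx n))) < x (lastIdx n))

/-- The open cube of edge `ℓ` centered at the origin. -/
def cube (n : ℕ) (ℓ : ℝ) : Set (En n) := {x | ∀ i, |x i| < ℓ / 2}

/-- The upper concave envelope of `u` in `Ω`: the smallest concave function `≥ u` in `Ω`. -/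
noncomputable def upperEnvelope {n : ℕ} (Ω : Set (En n)) (u : En n → ℝ) : En n → ℝ :=
  fun x => sInf {t | ∃ φ : En n → ℝ, ConcaveOn ℝ Ω φ ∧ (∀ z ∈ Ω, u z ≤ φ z) ∧ t = φ x}

/-- The lower convex envelope of `u` in `Ω`: the largest convex function `≤ u` in `Ω`. -/
noncomputable def lowerEnvelope {n : ℕ} (Ω : Set (En n)) (u : En n → ℝ) : En n → ℝ :=
  fun x => sSup {t | ∃ φ : En n → ℝ, ConvexOn ℝ Ω φ ∧ (∀ z ∈ Ω, φ z ≤ u z) ∧ t = φ x}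

end

open Matrix

/-- eigenvalues of `c • 1` are all `c`. -/
theorem eig_smul_one {n : ℕ} (c : ℝ) (hX : (c • (1 : Matrix (Fin n) (Fin n) ℝ)).IsHermitian)
    (i : Fin n) : hX.eigenvalues i = c := by
  have hv : ‖hX.eigenvectorBasis i‖ = 1 := hX.eigenvectorBasis.orthonormal.1 i
  rw [hX.eigenvalues_eq i]
  simp only [smul_mulVec, one_mulVec, dotProduct_smul, smul_eq_mul]
  have : (star ⇑(hX.eigenvectorBasis i) ⬝ᵥ ⇑(hX.eigenvectorBasis i))
      = @inner ℝ _ _ ((hX.eigenvectorBasis i) : EuclideanSpace ℝ (Fin n))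
        (hX.eigenvectorBasis i) := rfl
  rw [this, real_inner_self_eq_norm_sq, hv]
  norm_num

theorem isHermitian_smul_one {n : ℕ} (c : ℝ) :
    (c • (1 : Matrix (Fin n) (Fin n) ℝ)).IsHermitian := by
  unfold Matrix.IsHermitian
  ext i j
  simp [Matrix.conjTranspose_apply, Matrix.one_apply, eq_comm]

theorem Ma_smul_one {n : ℕ} (a : Fin n → ℝ) (c : ℝ) :
    Ma a (c • (1 : Matrix (Fin n) (Fin n) ℝ)) = c * ∑ i, a i := by
  unfold Ma sortedEig
  rw [dif_pos (isHermitian_smul_one c)]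
  simp only [eig_smul_one c]
  rw [Finset.mul_sum]
  exact Finset.sum_congr rfl fun i _ => mul_comm _ _

theorem hess_quad {n : ℕ} (C b : ℝ) (z : En n) (x : En n) :
    hess (fun x => C + b * ‖x - z‖^2) x = (2*b) • (1 : Matrix (Fin n) (Fin n) ℝ) := by
  funext i j
  show iteratedFDeriv ℝ 2 (fun x => C + b * ‖x - z‖^2) x
      ![EuclideanSpace.single i 1, EuclideanSpace.single j 1] = _
  set D : En n →L[ℝ] (En n →L[ℝ] ℝ) := (2*b) • (innerSL ℝ) with hD
  have h1 : ∀ y : En n, HasFDerivAt (fun x : En n => C + b * ‖x - z‖^2) (D (y - z)) y := by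
    intro y
    have hs : HasFDerivAt (fun x : En n => x - z) (ContinuousLinearMap.id ℝ (En n)) y :=
      (hasFDerivAt_id y).sub_const z
    have h2 := hs.norm_sq
    have h3 := (h2.const_mul b).const_add C
    refine h3.congr_fderiv ?_
    ext v
    simp [hD, two_smul, real_inner_comm]
    change _ = _ * (inner ℝ y v - inner ℝ z v)
    ring
  have hf : fderiv ℝ (fun x : En n => C + b * ‖x - z‖^2) = fun y => D (y - z) :=
    funext fun y => (h1 y).fderiv
  have h4 : HasFDerivAt (fun y : En n => D (y - z)) D x := by
    have := D.hasFDerivAt.comp x ((hasFDerivAt_id x).sub_const z)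
    rwa [ContinuousLinearMap.comp_id] at this
  rw [iteratedFDeriv_two_apply, hf, h4.fderiv]
  simp [hD, innerSL_apply_apply, EuclideanSpace.inner_single_left, EuclideanSpace.single_apply,
    Matrix.smul_apply, Matrix.one_apply, eq_comm]
  change _ = 2 * b * inner ℝ (EuclideanSpace.single i (1:ℝ) : En n) (EuclideanSpace.single j 1)
  simp [EuclideanSpace.inner_single_left, EuclideanSpace.single_apply, eq_comm]

theorem contDiff_quad {n : ℕ} (C b : ℝ) (z : En n) :
    ContDiff ℝ 2 (fun x : En n => C + b * ‖x - z‖^2) :=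
  contDiff_const.add (contDiff_const.mul ((contDiff_id.sub contDiff_const).norm_sq ℝ))

theorem usc_exists_max {α : Type*} [TopologicalSpace α] {s : Set α} (hs : IsCompact s)
    (hne : s.Nonempty) {f : α → ℝ} (hf : UpperSemicontinuousOn f s) :
    ∃ x ∈ s, ∀ y ∈ s, f y ≤ f x := by
  by_contra h
  push_neg at h
  choose! g hg hlt using h
  have hV : ∀ x (hx : x ∈ s), ∃ V, IsOpen V ∧ x ∈ V ∧ ∀ y ∈ V, y ∈ s → f y < f (g x) := by
    intro x hx
    have := hf x hx (f (g x)) (hlt x hx)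
    rw [eventually_nhdsWithin_iff] at this
    rcases eventually_nhds_iff.mp this with ⟨V, hV1, hV2, hV3⟩
    exact ⟨V, hV2, hV3, hV1⟩
  choose! V hVo hVx hVlt using hV
  obtain ⟨t, hcov⟩ := hs.elim_nhds_subcover' (fun x _ => V x)
    (fun x hx => (hVo x hx).mem_nhds (hVx x hx))
  have htne : t.Nonempty := by
    rcases hne with ⟨x, hx⟩
    rcases Set.mem_iUnion₂.mp (hcov hx) with ⟨y, hy, _⟩
    exact ⟨y, hy⟩
  obtain ⟨b, hbt, hbmax⟩ := t.exists_max_image (fun x => f (g x)) htne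
  have hgb : g (b : α) ∈ s := hg b b.2
  rcases Set.mem_iUnion₂.mp (hcov hgb) with ⟨y, hyt, hyV⟩
  exact lt_irrefl _ (lt_of_lt_of_le (hVlt y y.2 _ hyV hgb) (hbmax y hyt))

theorem subsol_bound (n : ℕ) (a : Fin n → ℝ) (ha : ClassAbar a)
    (Ω : Set (En n)) (hΩo : IsOpen Ω) (hΩb : Bornology.IsBounded Ω)
    (d : ℝ) (hd : d = Metric.diam Ω)
    (u f : En n → ℝ) (husc : UpperSemicontinuousOn u (closure Ω))
    (hsub : IsViscSubsol a Ω f u) (K : ℝ) (hK : ∀ x ∈ Ω, K ≤ f x) :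
    ∀ x ∈ closure Ω,
      u x ≤ sSup (u '' frontier Ω) +
        d ^ 2 / (∑ i, a i) * sSup ((fun y => max (-f y) 0) '' Ω) := by
  intro x hx
  rcases Set.eq_empty_or_nonempty Ω with hΩe | ⟨z, hz⟩
  · rw [hΩe] at hx; simp at hx
  set A := ∑ i, a i with hA
  have hApos : 0 < A := by
    obtain ⟨i0, hi0⟩ := ha.2
    exact lt_of_lt_of_le hi0 (Finset.single_le_sum (fun i _ => ha.1 i) (Finset.mem_univ i0))
  set M := sSup ((fun y => max (-f y) 0) '' Ω) with hM
  set S := sSup (u '' frontier Ω) with hS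
  have hMbdd : BddAbove ((fun y => max (-f y) 0) '' Ω) := by
    refine ⟨max (-K) 0, ?_⟩
    rintro _ ⟨y, hy, rfl⟩
    exact max_le_max (neg_le_neg (hK y hy)) le_rfl
  have hM0 : 0 ≤ M := le_csSup_of_le hMbdd ⟨z, hz, rfl⟩ (le_max_right _ _)
  have hcomp : IsCompact (closure Ω) := hΩb.isCompact_closure
  have hclne : (closure Ω).Nonempty := ⟨z, subset_closure hz⟩
  have hd0 : 0 ≤ d := hd ▸ Metric.diam_nonneg
  -- key estimate for each δ > 0
  have key : ∀ δ : ℝ, 0 < δ → u x ≤ S + (M / A + δ) * d ^ 2 := by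
    intro δ hδ
    set c := M / A + δ with hc
    have hc0 : 0 < c := add_pos_of_nonneg_of_pos (div_nonneg hM0 hApos.le) hδ
    set w : En n → ℝ := fun y => (S + c * d^2) + (-c) * ‖y - z‖^2 with hw
    have hwC2 : ContDiff ℝ 2 w := contDiff_quad _ _ _
    have hwc : Continuous w := hwC2.continuous
    have husc2 : UpperSemicontinuousOn (fun y => u y - w y) (closure Ω) := by
      have : UpperSemicontinuousOn (fun y => -w y) (closure Ω) := fun y hy =>
        ((hwc.neg).continuousWithinAt).upperSemicontinuousWithinAt
      simpa [sub_eq_add_neg] using husc.add this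
    obtain ⟨x₀, hx₀, hmax⟩ := usc_exists_max hcomp hclne husc2
    -- x₀ cannot be interior
    have hx₀Ω : x₀ ∉ Ω := by
      intro hx₀Ω
      have hloc : IsLocalMaxOn (fun y => u y - w y) Ω x₀ :=
        eventually_nhdsWithin_of_forall (fun y hy => hmax y (subset_closure hy))
      have h1 : f x₀ ≤ Ma a (hess w x₀) := hsub x₀ hx₀Ω w hwC2 hloc
      rw [hw, hess_quad, Ma_smul_one] at h1
      have h2 : -f x₀ ≤ M := le_trans (le_max_left _ _) (le_csSup hMbdd ⟨x₀, hx₀Ω, rfl⟩)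
      have h3 : c * A = M + δ * A := by
        rw [hc]; field_simp
      nlinarith [h1, h2, h3, mul_pos hδ hApos]
    -- so x₀ is on the boundary
    have hx₀f : x₀ ∈ frontier Ω := by
      rw [frontier, hΩo.interior_eq]
      exact ⟨hx₀, hx₀Ω⟩
    -- u is bounded above on the frontier
    obtain ⟨B, hB⟩ := hcomp.exists_bound_of_continuousOn hwc.continuousOn
    have hSbdd : BddAbove (u '' frontier Ω) := by
      refine ⟨B + (u x₀ - w x₀), ?_⟩
      rintro _ ⟨y, hy, rfl⟩
      have hyc : y ∈ closure Ω := hy.1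
      have := hmax y hyc
      have hwB : w y ≤ B := le_trans (le_abs_self _) (hB y hyc)
      linarith
    have hux₀ : u x₀ ≤ S := le_csSup hSbdd ⟨x₀, hx₀f, rfl⟩
    -- w x₀ ≥ S
    have hdist : ‖x₀ - z‖ ≤ d := by
      rw [← dist_eq_norm, hd, ← Metric.diam_closure]
      exact Metric.dist_le_diam_of_mem hcomp.isBounded hx₀ (subset_closure hz)
    have hnsq : ‖x₀ - z‖^2 ≤ d^2 := by
      nlinarith [norm_nonneg (x₀ - z)]
    have hwx₀ : S ≤ w x₀ := by
      rw [hw]; simp only; nlinarith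
    -- conclude
    have hxd : ‖x - z‖ ≥ 0 := norm_nonneg _
    have h5 : u x - w x ≤ u x₀ - w x₀ := hmax x hx
    have h6 : u x₀ - w x₀ ≤ 0 := by linarith
    have h7 : w x ≤ S + c * d^2 := by
      rw [hw]; simp only; nlinarith
    linarith
  -- pass to the limit δ → 0
  by_contra hcon
  push_neg at hcon
  have hε : 0 < u x - (S + d^2 / A * M) := by linarith
  set δ := (u x - (S + d^2 / A * M)) / (d^2 + 1) with hδdef
  have hδpos : 0 < δ := div_pos hε (by positivity)
  have := key δ hδpos
  have hMA : M / A * d^2 = d^2 / A * M := by ring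
  have hδd : δ * d^2 < u x - (S + d^2 / A * M) := by
    rw [hδdef]
    rw [div_mul_eq_mul_div, div_lt_iff₀ (by positivity : (0:ℝ) < d^2 + 1)]
    nlinarith
  nlinarith

theorem supersol_bound (n : ℕ) (a : Fin n → ℝ) (ha : ClassAbar a)
    (Ω : Set (En n)) (hΩo : IsOpen Ω) (hΩb : Bornology.IsBounded Ω)
    (d : ℝ) (hd : d = Metric.diam Ω)
    (u f : En n → ℝ) (hlsc : LowerSemicontinuousOn u (closure Ω))
    (hsup : IsViscSupersol a Ω f u) (K : ℝ) (hK : ∀ x ∈ Ω, f x ≤ K) :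
    ∀ x ∈ closure Ω,
      sInf (u '' frontier Ω) -
        d ^ 2 / (∑ i, a i) * sSup ((fun y => max (f y) 0) '' Ω) ≤ u x := by
  intro x hx
  rcases Set.eq_empty_or_nonempty Ω with hΩe | ⟨z, hz⟩
  · rw [hΩe] at hx; simp at hx
  set A := ∑ i, a i with hA
  have hApos : 0 < A := by
    obtain ⟨i0, hi0⟩ := ha.2
    exact lt_of_lt_of_le hi0 (Finset.single_le_sum (fun i _ => ha.1 i) (Finset.mem_univ i0))
  set M := sSup ((fun y => max (f y) 0) '' Ω) with hM
  set I := sInf (u '' frontier Ω) with hI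
  have hMbdd : BddAbove ((fun y => max (f y) 0) '' Ω) := by
    refine ⟨max K 0, ?_⟩
    rintro _ ⟨y, hy, rfl⟩
    exact max_le_max (hK y hy) le_rfl
  have hM0 : 0 ≤ M := le_csSup_of_le hMbdd ⟨z, hz, rfl⟩ (le_max_right _ _)
  have hcomp : IsCompact (closure Ω) := hΩb.isCompact_closure
  have hclne : (closure Ω).Nonempty := ⟨z, subset_closure hz⟩
  have hd0 : 0 ≤ d := hd ▸ Metric.diam_nonneg
  have key : ∀ δ : ℝ, 0 < δ → I - (M / A + δ) * d ^ 2 ≤ u x := by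
    intro δ hδ
    set c := M / A + δ with hc
    have hc0 : 0 < c := add_pos_of_nonneg_of_pos (div_nonneg hM0 hApos.le) hδ
    set w : En n → ℝ := fun y => (I - c * d^2) + c * ‖y - z‖^2 with hw
    have hwC2 : ContDiff ℝ 2 w := contDiff_quad _ _ _
    have hwc : Continuous w := hwC2.continuous
    have husc_neg : UpperSemicontinuousOn (fun y => -u y) (closure Ω) := by
      intro y hy t ht
      have h1 : -t < u y := by simpa using neg_lt_of_neg_lt ht
      filter_upwards [hlsc y hy (-t) h1] with y' h using by simpa using neg_lt_of_neg_lt h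
    have husc2 : UpperSemicontinuousOn (fun y => w y - u y) (closure Ω) := by
      have hwu : UpperSemicontinuousOn w (closure Ω) := fun y hy =>
        (hwc.continuousWithinAt).upperSemicontinuousWithinAt
      simpa [sub_eq_add_neg] using hwu.add husc_neg
    obtain ⟨x₀, hx₀, hmax⟩ := usc_exists_max hcomp hclne husc2
    have hx₀Ω : x₀ ∉ Ω := by
      intro hx₀Ω
      have hloc : IsLocalMinOn (fun y => u y - w y) Ω x₀ :=
        eventually_nhdsWithin_of_forall (fun y hy => by
          have := hmax y (subset_closure hy); simp only; linarith)
      have h1 : Ma a (hess w x₀) ≤ f x₀ := hsup x₀ hx₀Ω w hwC2 hloc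
      rw [hw, hess_quad, Ma_smul_one] at h1
      have h2 : f x₀ ≤ M := le_trans (le_max_left _ _) (le_csSup hMbdd ⟨x₀, hx₀Ω, rfl⟩)
      have h3 : c * A = M + δ * A := by
        rw [hc]; field_simp
      nlinarith [h1, h2, h3, mul_pos hδ hApos]
    have hx₀f : x₀ ∈ frontier Ω := by
      rw [frontier, hΩo.interior_eq]
      exact ⟨hx₀, hx₀Ω⟩
    obtain ⟨B, hB⟩ := hcomp.exists_bound_of_continuousOn hwc.continuousOn
    have hIbdd : BddBelow (u '' frontier Ω) := by
      refine ⟨-B + (u x₀ - w x₀), ?_⟩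
      rintro _ ⟨y, hy, rfl⟩
      have hyc : y ∈ closure Ω := hy.1
      have := hmax y hyc
      have hwB : -B ≤ w y := neg_le_of_abs_le (hB y hyc)
      linarith
    have hux₀ : I ≤ u x₀ := csInf_le hIbdd ⟨x₀, hx₀f, rfl⟩
    have hdist : ‖x₀ - z‖ ≤ d := by
      rw [← dist_eq_norm, hd, ← Metric.diam_closure]
      exact Metric.dist_le_diam_of_mem hcomp.isBounded hx₀ (subset_closure hz)
    have hnsq : ‖x₀ - z‖^2 ≤ d^2 := by
      nlinarith [norm_nonneg (x₀ - z)]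
    have hwx₀ : w x₀ ≤ I := by
      rw [hw]; simp only; nlinarith
    have hxd : ‖x - z‖ ≥ 0 := norm_nonneg _
    have h5 : w x - u x ≤ w x₀ - u x₀ := hmax x hx
    have h6 : w x₀ - u x₀ ≤ 0 := by linarith
    have h7 : I - c * d^2 ≤ w x := by
      rw [hw]; simp only; nlinarith
    linarith
  by_contra hcon
  push_neg at hcon
  have hε : 0 < (I - d^2 / A * M) - u x := by linarith
  set δ := ((I - d^2 / A * M) - u x) / (d^2 + 1) with hδdef
  have hδpos : 0 < δ := div_pos hε (by positivity)
  have := key δ hδpos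
  have hδd : δ * d^2 < (I - d^2 / A * M) - u x := by
    rw [hδdef]
    rw [div_mul_eq_mul_div, div_lt_iff₀ (by positivity : (0:ℝ) < d^2 + 1)]
    nlinarith
  have hexp : (M / A + δ) * d^2 = d^2 / A * M + δ * d^2 := by ring
  linarith


/-- **Uniform estimate (Proposition 3.3).** Let `Ω ⊆ ℝⁿ` be bounded open of diameter `d`
and `M_a ∈ 𝒜̄` with `|a| = a₁ + ⋯ + aₙ`. If `u` is usc on `Ω̄`, `M_a(D²u) ≥ f` in `Ω` in
the viscosity sense and `f` is bounded below, then
`u ≤ max_{∂Ω} u + (d²/|a|) ‖f⁻‖_{L^∞(Ω)}` on `Ω̄`; dually for supersolutions. -/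
theorem uniform_estimate (n : ℕ) (a : Fin n → ℝ) (ha : ClassAbar a)
    (Ω : Set (En n)) (hΩo : IsOpen Ω) (hΩb : Bornology.IsBounded Ω)
    (d : ℝ) (hd : d = Metric.diam Ω) :
    (∀ u f : En n → ℝ, UpperSemicontinuousOn u (closure Ω) →
      IsViscSubsol a Ω f u → (∃ K, ∀ x ∈ Ω, K ≤ f x) →
      ∀ x ∈ closure Ω,
        u x ≤ sSup (u '' frontier Ω) +
          d ^ 2 / (∑ i, a i) * sSup ((fun y => max (-f y) 0) '' Ω)) ∧
    (∀ u f : En n → ℝ, LowerSemicontinuousOn u (closure Ω) →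
      IsViscSupersol a Ω f u → (∃ K, ∀ x ∈ Ω, f x ≤ K) →
      ∀ x ∈ closure Ω,
        sInf (u '' frontier Ω) -
          d ^ 2 / (∑ i, a i) * sSup ((fun y => max (f y) 0) '' Ω) ≤ u x) := by
  constructor
  · intro u f husc hsub hKe x hx
    obtain ⟨K, hK⟩ := hKe
    exact subsol_bound n a ha Ω hΩo hΩb d hd u f husc hsub K hK x hx
  · intro u f hlsc hsup hKe x hx
    obtain ⟨K, hK⟩ := hKe
    exact supersol_bound n a ha Ω hΩo hΩb d hd u f hlsc hsup K hK x hx
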